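/- Let p be a prime, let A ∈ ℤ with gcd(A, p) = 1, and let k ≥ 2 be an integer with k ≡ 2 (mod 3). If p ≠ 3, then S(A x³, p^k) = p^{(2k−1)/3}. If p = 3, then S(A x³, 3^k) = 3^{(2k−1)/3} · (1 + 2·cos(2πA/9)). -/

import Mathlib

/-! Write `j = u + a t` with `u < a`, `t < b`, where `b ∣ a`, so that `ab ∣ a²`: then
`A j³ ≡ A u³ + 3 A u² a t (mod ab)` and the sum over `t` vanishes unless `b ∣ 3 A u²`.
For `a = p^(k+1)`, `b = p²` this forces `p ∣ u`, and `u = p w` gives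
`S(Ax³, p^(k+3)) = p² S(Ax³, p^k)`. For `a = b = p ≠ 3` only `u = 0` survives, so
`S(Ax³, p²) = p`; for `a = b = 3` every `u` survives and
`S(Ax³, 9) = 3 (1 + e(A/9) + e(8A/9))`. -/

noncomputable section

namespace CubicAppendix

/-- `S(Ax³, c) := ∑_{j=0}^{c−1} exp(2πi A j³ / c)`. -/
def S (A : ℤ) (c : ℕ) : ℂ :=
  ∑ j ∈ Finset.range c,
    Complex.exp (2 * Real.pi * Complex.I * (A : ℂ) * (j : ℂ) ^ 3 / (c : ℂ))

open Complex Finset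

def e (c : ℕ) (m : ℤ) : ℂ := exp (2 * Real.pi * I * m / c)

lemma e_eq_zpow (c : ℕ) (m : ℤ) : e c m = exp (2 * Real.pi * I / c) ^ m := by
  rw [e, ← exp_int_mul]
  ring_nf

lemma e_add (c : ℕ) (m m' : ℤ) : e c (m + m') = e c m * e c m' := by
  simp only [e, ← exp_add]
  push_cast
  ring_nf

lemma e_zero (c : ℕ) : e c 0 = 1 := by
  simp [e]

lemma e_mul_mul {d : ℕ} (c : ℕ) (hd : d ≠ 0) (m : ℤ) : e (c * d) (m * d) = e c m := by
  rw [e, e]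
  congr 1
  push_cast
  field_simp

lemma e_eq_one_iff {c : ℕ} (hc : c ≠ 0) (m : ℤ) : e c m = 1 ↔ (c : ℤ) ∣ m := by
  rw [e_eq_zpow, (isPrimitiveRoot_exp c hc).zpow_eq_one_iff_dvd]

lemma e_add_of_dvd {c : ℕ} {m' : ℤ} (h : (c : ℤ) ∣ m') (m : ℤ) : e c (m + m') = e c m := by
  rcases eq_or_ne c 0 with rfl | hc
  · simp [e]
  · rw [e_add, (e_eq_one_iff hc m').2 h, mul_one]

lemma e_add_e_neg (c : ℕ) (m : ℤ) :
    e c m + e c (-m) = 2 * Real.cos (2 * Real.pi * m / c) := by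
  push_cast
  rw [two_cos, e, e]
  push_cast
  ring_nf

lemma sum_range_e_mul {n : ℕ} (hn : n ≠ 0) (m : ℤ) :
    ∑ t ∈ range n, e n (m * t) = if (n : ℤ) ∣ m then (n : ℂ) else 0 := by
  have hpow (t : ℕ) : e n (m * t) = e n m ^ t := by
    rw [e_eq_zpow, e_eq_zpow, zpow_mul, zpow_natCast]
  simp only [hpow]
  split_ifs with h
  · simp [(e_eq_one_iff hn m).2 h]
  · rw [geom_sum_eq ((e_eq_one_iff hn m).not.2 h), ← hpow,
      (e_eq_one_iff hn _).2 (dvd_mul_left _ _), sub_self, zero_div]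

lemma sum_range_mul {M : Type*} [AddCommMonoid M] (f : ℕ → M) (a b : ℕ) :
    ∑ j ∈ range (a * b), f j = ∑ u ∈ range a, ∑ t ∈ range b, f (u + a * t) := by
  rw [sum_comm]
  induction b with
  | zero => simp
  | succ b ih =>
    rw [Nat.mul_succ, sum_range_add, ih, sum_range_succ]
    simp only [add_comm]

lemma sum_range_mul_ite_dvd {M : Type*} [AddCommMonoid M] (g : ℕ → M) {p : ℕ} (hp : p ≠ 0)
    (n : ℕ) :
    ∑ u ∈ range (p * n), (if p ∣ u then g u else 0) = ∑ w ∈ range n, g (p * w) := by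
  rw [sum_range_mul, sum_eq_single 0]
  · simp
  · intro r hr hr0
    have hpr : ¬ p ∣ r := fun h => hr0 (Nat.eq_zero_of_dvd_of_lt h (mem_range.1 hr))
    simp [(Nat.dvd_add_left (dvd_mul_right p _)).not.2 hpr]
  · simp [Nat.pos_of_ne_zero hp]

lemma S_eq_sum_e (A : ℤ) (c : ℕ) : S A c = ∑ j ∈ range c, e c (A * j ^ 3) := by
  refine sum_congr rfl fun j _ => ?_
  rw [e]
  push_cast
  ring_nf

lemma sum_e_cube_split {a b : ℕ} (hb : b ≠ 0) (hba : b ∣ a) (A : ℤ) :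
    ∑ j ∈ range (a * b), e (a * b) (A * j ^ 3) =
      b * ∑ u ∈ range a, if (b : ℤ) ∣ 3 * A * u ^ 2 then e (a * b) (A * u ^ 3) else 0 := by
  rcases eq_or_ne a 0 with rfl | ha
  · simp
  have hab : ((a * b : ℕ) : ℤ) ∣ (a : ℤ) ^ 2 := by
    rw [sq]
    exact_mod_cast mul_dvd_mul_left a hba
  rw [sum_range_mul, mul_sum]
  refine sum_congr rfl fun u _ => ?_
  have hterm (t : ℕ) :
      e (a * b) (A * ((u + a * t : ℕ) : ℤ) ^ 3) =
        e (a * b) (A * u ^ 3) * e b (3 * A * u ^ 2 * t) := by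
    have hexpand : A * ((u + a * t : ℕ) : ℤ) ^ 3 =
        (A * u ^ 3 + 3 * A * u ^ 2 * t * a) + a ^ 2 * (3 * A * u * t ^ 2 + A * a * t ^ 3) := by
      push_cast
      ring
    rw [hexpand, e_add_of_dvd (hab.mul_right _), e_add, Nat.mul_comm a b, e_mul_mul b ha]
  simp only [hterm, ← mul_sum, sum_range_e_mul hb]
  split_ifs <;> ring

lemma dvd_of_prime_pow_dvd_mul_mul_sq {q A u c : ℤ} {m : ℕ} (hq : Prime q) (hA : IsCoprime q A)
    (hc : ¬ q ^ m ∣ c) (h : q ^ m ∣ c * A * u ^ 2) : q ∣ u := by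
  by_contra hu
  have hcop : IsCoprime (q ^ m) (A * u ^ 2) :=
    (hA.mul_right ((hq.irreducible.coprime_iff_not_dvd).2 hu).pow_right).pow_left
  exact hc (hcop.dvd_of_dvd_mul_right (by rwa [mul_assoc] at h))

lemma pow_dvd_three_mul_sq_iff {q A u : ℤ} {m : ℕ} (hq : Prime q) (hA : IsCoprime q A)
    (hm : m ≤ 2) (h3 : ¬ q ^ m ∣ 3) : q ^ m ∣ 3 * A * u ^ 2 ↔ q ∣ u :=
  ⟨dvd_of_prime_pow_dvd_mul_mul_sq hq hA h3,
    fun h => ((pow_dvd_pow q hm).trans (pow_dvd_pow_of_dvd h 2)).mul_left _⟩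

lemma sum_e_cube_prime_pow_mul {p m n : ℕ} (hp : p.Prime) {A : ℤ} (hA : IsCoprime (p : ℤ) A)
    (hm : m ≤ 2) (h3 : ¬ (p : ℤ) ^ m ∣ 3) (hdvd : p ^ m ∣ p * n) :
    ∑ j ∈ range (p * n * p ^ m), e (p * n * p ^ m) (A * j ^ 3) =
      p ^ m * ∑ w ∈ range n, e (p * n * p ^ m) (A * p ^ 3 * w ^ 3) := by
  rw [sum_e_cube_split (pow_ne_zero m hp.ne_zero) hdvd]
  push_cast
  simp only [pow_dvd_three_mul_sq_iff (Nat.prime_iff_prime_int.1 hp) hA hm h3,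
    Int.natCast_dvd_natCast]
  rw [sum_range_mul_ite_dvd (fun u => e (p * n * p ^ m) (A * u ^ 3)) hp.ne_zero]
  push_cast
  ring_nf

lemma S_prime_pow_add_three {p : ℕ} (hp : p.Prime) {A : ℤ} (hA : IsCoprime (p : ℤ) A) {k : ℕ}
    (hk : 1 ≤ k) : S A (p ^ (k + 3)) = p ^ 2 * S A (p ^ k) := by
  have h3 : ¬ (p : ℤ) ^ 2 ∣ 3 := fun h => by
    have := Int.le_of_dvd three_pos h
    have := hp.two_le
    nlinarith
  have hdvd : p ^ 2 ∣ p * p ^ k := by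
    rw [← pow_succ']
    exact pow_dvd_pow p (by omega)
  have hsum := sum_e_cube_prime_pow_mul hp hA le_rfl h3 hdvd
  rw [show p * p ^ k * p ^ 2 = p ^ k * p ^ 3 by ring] at hsum
  rw [S_eq_sum_e, S_eq_sum_e, pow_add, hsum]
  congr 1
  refine sum_congr rfl fun w _ => ?_
  rw [← e_mul_mul (p ^ k) (pow_ne_zero 3 hp.ne_zero) (A * w ^ 3)]
  congr 1
  push_cast
  ring

lemma S_prime_sq {p : ℕ} (hp : p.Prime) {A : ℤ} (hA : IsCoprime (p : ℤ) A) (hp3 : p ≠ 3) :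
    S A (p ^ 2) = p := by
  have h3 : ¬ (p : ℤ) ^ 1 ∣ 3 := by
    rw [pow_one]
    exact_mod_cast fun h => hp3 ((Nat.prime_dvd_prime_iff_eq hp Nat.prime_three).1 h)
  have hsum := sum_e_cube_prime_pow_mul (n := 1) hp hA (by norm_num) h3 (by simp)
  rw [S_eq_sum_e, show p ^ 2 = p * 1 * p ^ 1 by ring, hsum]
  simp [e_zero]

lemma S_nine (A : ℤ) : S A 9 = 3 * ((1 + 2 * Real.cos (2 * Real.pi * (A : ℝ) / 9) : ℝ) : ℂ) := by
  have h8 : e 9 (A * 8) = e 9 (-A) := by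
    rw [show A * 8 = -A + 9 * A by ring, e_add_of_dvd (c := 9) (by norm_num)]
  rw [S_eq_sum_e, show 9 = 3 * 3 from rfl, sum_e_cube_split three_ne_zero dvd_rfl]
  simp only [mul_assoc, Nat.cast_ofNat, dvd_mul_right, if_true, sum_range_succ, sum_range_zero]
  norm_num [e_zero]
  rw [h8, add_assoc, e_add_e_neg]
  push_cast
  ring_nf

lemma S_prime_pow_three_mul_add_two {p : ℕ} (hp : p.Prime) {A : ℤ} (hA : IsCoprime (p : ℤ) A)
    (i : ℕ) : S A (p ^ (3 * i + 2)) = p ^ (2 * i) * S A (p ^ 2) := by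
  induction i with
  | zero => simp
  | succ i ih =>
    rw [show 3 * (i + 1) + 2 = 3 * i + 2 + 3 by ring, S_prime_pow_add_three hp hA (by omega), ih]
    ring

theorem stmt17_general (p : ℕ) (hp : p.Prime) (A : ℤ) (hA : Int.gcd A p = 1)
    (k : ℕ) (h3 : k % 3 = 2) :
    (p ≠ 3 → S A (p ^ k) = (p : ℂ) ^ ((2 * k - 1) / 3)) ∧
    (p = 3 → S A (3 ^ k) =
      (3 : ℂ) ^ ((2 * k - 1) / 3) *
        ((1 + 2 * Real.cos (2 * Real.pi * (A : ℝ) / 9) : ℝ) : ℂ)) := by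
  obtain ⟨i, rfl⟩ : ∃ i, k = 3 * i + 2 := ⟨k / 3, by omega⟩
  have hexp : (2 * (3 * i + 2) - 1) / 3 = 2 * i + 1 := by omega
  have hA' : IsCoprime (p : ℤ) A := (Int.isCoprime_iff_gcd_eq_one.2 hA).symm
  rw [hexp]
  refine ⟨fun hp3 => ?_, fun hp3 => ?_⟩
  · rw [S_prime_pow_three_mul_add_two hp hA', S_prime_sq hp hA' hp3, pow_succ]
  · subst hp3
    rw [S_prime_pow_three_mul_add_two hp hA', show 3 ^ 2 = 9 by rfl, S_nine, pow_succ]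
    push_cast
    ring

theorem stmt17 (p : ℕ) (hp : p.Prime) (A : ℤ) (hA : Int.gcd A p = 1)
    (k : ℕ) (hk : 2 ≤ k) (h3 : k % 3 = 2) :
    (p ≠ 3 → S A (p ^ k) = (p : ℂ) ^ ((2 * k - 1) / 3)) ∧
    (p = 3 → S A (3 ^ k) =
      (3 : ℂ) ^ ((2 * k - 1) / 3) *
        ((1 + 2 * Real.cos (2 * Real.pi * (A : ℝ) / 9) : ℝ) : ℂ)) :=
  stmt17_general p hp A hA k h3

end CubicAppendix
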